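/- Let ω be a majorant satisfying ∫_0^δ ω(t)/t dt ≤ M ω(δ) for all sufficiently small δ > 0 and some constant M > 0, and let G be a proper subdomain of the plane such that each pair of points z, w ∈ G can be joined by a rectifiable curve γ ⊂ G with ∫_γ ω(d_G(ζ))/d_G(ζ) ds(ζ) ≤ C ω(|z−w|) for a fixed constant C = C(G,ω) > 0, where ds is arc length. If f is a real harmonic function in G that extends continuously to the boundary ∂G, then the following are equivalent: (i) f ∈ L_ω(G); (ii) |f| ∈ L_ω(G); (iii) |f| ∈ L_ω(G, ∂G). -/

import Mathlib

open MeasureTheory Metric Set Real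
open scoped ENNReal

/-- A real-valued function on `ℂ ≅ ℝ²` is harmonic on a set: it is `C²` there and
its Laplacian `u_xx + u_yy` vanishes. -/
def IsHarmonicOnR (u : ℂ → ℝ) (s : Set ℂ) : Prop :=
  ContDiffOn ℝ 2 u s ∧ ∀ z ∈ s,
    fderiv ℝ (fun w => fderiv ℝ u w 1) z 1
      + fderiv ℝ (fun w => fderiv ℝ u w Complex.I) z Complex.I = 0

/-- `|∇u(z)|`: the Euclidean norm of the gradient `(u_x, u_y)` of a real-valued
function `u` on `ℂ ≅ ℝ²`. -/
noncomputable def gradNorm (u : ℂ → ℝ) (z : ℂ) : ℝ :=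
  Real.sqrt ((fderiv ℝ u z 1) ^ 2 + (fderiv ℝ u z Complex.I) ^ 2)

/-- A majorant: a continuous increasing function `ω : [0,∞) → [0,∞)` with
`ω 0 = 0` such that `ω t / t` is non-increasing for `t > 0`. -/
def IsMajorant (ω : ℝ → ℝ) : Prop :=
  ContinuousOn ω (Ici 0) ∧ MonotoneOn ω (Ici 0) ∧ ω 0 = 0 ∧
    ∀ s t : ℝ, 0 < s → s ≤ t → ω t / t ≤ ω s / s

/-!
The implications (i) ⇒ (ii) ⇒ (iii) are elementary, the second one by continuity of `f` up to
`∂G`. For (iii) ⇒ (i), fix `z ∈ G`, put `d = d_G(z)` and let `w₀ ∈ ∂G` be a nearest boundary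
point. On the disc `B(z, d)` every point is within `2d` of `w₀`, so `||f| - |f w₀|| ≤ 2Kω(d)`
there; hence `f` oscillates by at most `8Kω(d)` on the disc (if `f` changes sign it vanishes
somewhere, which forces `|f w₀|` to be small). Writing `f = Re F` with `F` holomorphic on the
disc, Borel–Carathéodory and Cauchy's estimate give `|∇f(z)| = |F'(z)| ≤ 32Kω(d)/d`.
Integrating this along the curves of the curve condition yields
`|f z - f w| ≤ 32KC ω(|z - w|)`.
-/

open Complex Filter InnerProductSpace Topology

theorem IsHarmonicOnR.harmonicOnNhd {f : ℂ → ℝ} {G : Set ℂ} (hG : IsOpen G)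
    (hf : IsHarmonicOnR f G) : HarmonicOnNhd f G := by
  intro z hz
  refine ⟨hf.1.contDiffAt (hG.mem_nhds hz), ?_⟩
  filter_upwards [hG.mem_nhds hz] with y hy
  have hd : DifferentiableAt ℝ (fderiv ℝ f) y :=
    ((hf.1.contDiffAt (hG.mem_nhds hy)).fderiv_right (m := 1) le_rfl).differentiableAt
      one_ne_zero
  have hpartial (v : ℂ) :
      fderiv ℝ (fun w => fderiv ℝ f w v) y v = fderiv ℝ (fderiv ℝ f) y v v := by
    simp [fderiv_clm_apply hd (differentiableAt_const v)]
  simpa [laplacian_eq_iteratedFDeriv_complexPlane, iteratedFDeriv_two_apply, hpartial]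
    using hf.2 y hy

theorem fderiv_apply_eq_re_deriv_mul {f : ℂ → ℝ} {F : ℂ → ℂ} {z : ℂ}
    (hF : DifferentiableAt ℂ F z) (hfF : (fun y => (F y).re) =ᶠ[𝓝 z] f) (v : ℂ) :
    fderiv ℝ f z v = (deriv F z * v).re := by
  have h := (reCLM.hasFDerivAt.comp z
    (hF.hasDerivAt.hasFDerivAt.restrictScalars ℝ)).congr_of_eventuallyEq hfF.symm
  rw [h.fderiv]
  simp [mul_comm]

theorem gradNorm_eq_norm_deriv {f : ℂ → ℝ} {F : ℂ → ℂ} {z : ℂ}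
    (hF : DifferentiableAt ℂ F z) (hfF : (fun y => (F y).re) =ᶠ[𝓝 z] f) :
    gradNorm f z = ‖deriv F z‖ := by
  rw [gradNorm, fderiv_apply_eq_re_deriv_mul hF hfF, fderiv_apply_eq_re_deriv_mul hF hfF,
    Complex.norm_def, Complex.normSq_apply]
  simp [sq]

theorem abs_fderiv_apply_le_gradNorm_mul_norm (f : ℂ → ℝ) (z v : ℂ) :
    |fderiv ℝ f z v| ≤ gradNorm f z * ‖v‖ := by
  have hv : fderiv ℝ f z v = v.re * fderiv ℝ f z 1 + v.im * fderiv ℝ f z I := by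
    conv_lhs => rw [show v = v.re • (1 : ℂ) + v.im • I by apply Complex.ext <;> simp]
    rw [map_add, map_smul, map_smul, smul_eq_mul, smul_eq_mul]
  rw [hv, gradNorm, Complex.norm_def, Complex.normSq_apply, ← Real.sqrt_mul (by positivity)]
  apply Real.abs_le_sqrt
  nlinarith [sq_nonneg (v.re * fderiv ℝ f z I - v.im * fderiv ℝ f z 1)]

/-- Borel–Carathéodory on `ball c R` bounds `‖F - F c‖` in terms of `B` on the circle of radius
`R / 2`, and Cauchy's estimate on that circle then bounds `F' c`. -/
theorem norm_deriv_le_of_forall_re_sub_le {F : ℂ → ℂ} {c : ℂ} {R B : ℝ} (hR : 0 < R)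
    (hF : DifferentiableOn ℂ F (ball c R)) (hB : ∀ ζ ∈ ball c R, (F ζ - F c).re ≤ B) :
    ‖deriv F c‖ ≤ 4 * B / R := by
  have hB0 : 0 ≤ B := by simpa using hB c (mem_ball_self hR)
  -- Borel–Carathéodory needs a strictly positive bound.
  refine le_of_forall_pos_le_add fun ε hε => ?_
  set M := B + ε * R / 4
  have hM : 0 < M := by positivity
  have hsphere : ∀ ζ ∈ sphere c (R / 2), ‖F ζ - F c‖ ≤ 2 * M := by
    intro ζ hζ
    have hH : DifferentiableOn ℂ (fun x => F (x + c) - F c) (ball 0 R) :=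
      (hF.comp (differentiableOn_id.add_const c) fun x hx => by
        simpa [dist_eq_norm] using hx).sub_const _
    have hnorm : ‖ζ - c‖ = R / 2 := by rwa [mem_sphere_iff_norm] at hζ
    have := borelCaratheodory_zero hM hH
      (fun x hx => (hB (x + c) (by simpa [mem_ball, dist_eq_norm] using hx)).trans
        (by simp only [M]; nlinarith))
      hR (z := ζ - c) (by rw [mem_ball_zero_iff, hnorm]; linarith) (by simp)
    rwa [hnorm, sub_add_cancel, show R - R / 2 = R / 2 by ring, mul_div_assoc,
      div_self (half_pos hR).ne', mul_one] at this
  have hcauchy := norm_deriv_le_of_forall_mem_sphere_norm_le (half_pos hR)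
    ((hF.mono ?_).sub_const (F c)).diffContOnCl hsphere
  · rw [deriv_sub_const] at hcauchy
    exact hcauchy.trans_eq (by simp only [M]; field_simp; ring)
  · rw [closure_ball c (half_pos hR).ne']
    exact closedBall_subset_ball (half_lt_self hR)

theorem ball_infDist_frontier_subset {E : Type*} [NormedAddCommGroup E] [NormedSpace ℝ E]
    {G : Set E} (hG : IsOpen G) {z : E} (hz : z ∈ G) :
    ball z (infDist z (frontier G)) ⊆ G := by
  intro y hy
  have hzb : z ∈ ball z (infDist z (frontier G)) := mem_ball_self (pos_of_mem_ball hy)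
  refine (convex_ball _ _).isPreconnected.subset_of_closure_inter_subset hG ⟨z, hzb, hz⟩
    ?_ hy
  rintro x ⟨hxc, hxb⟩
  by_contra hxG
  have hxf : x ∈ frontier G := by rw [hG.frontier_eq]; exact ⟨hxc, hxG⟩
  have := infDist_le_dist_of_mem (x := z) hxf
  rw [mem_ball, dist_comm] at hxb
  linarith

theorem infDist_frontier_pos {X : Type*} [MetricSpace X] {G : Set X} (hG : IsOpen G)
    (hfr : (frontier G).Nonempty) {z : X} (hz : z ∈ G) : 0 < infDist z (frontier G) := by
  rw [← isClosed_frontier.notMem_iff_infDist_pos hfr, hG.frontier_eq]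
  exact fun h => h.2 hz

theorem IsMajorant.map_two_mul_le {ω : ℝ → ℝ} (hω : IsMajorant ω) {t : ℝ} (ht : 0 < t) :
    ω (2 * t) ≤ 2 * ω t := by
  have h := hω.2.2.2 t (2 * t) ht (by linarith)
  rw [div_le_div_iff₀ (by linarith) ht] at h
  nlinarith

theorem abs_sub_le_of_abs_abs_sub_le {X : Type*} [TopologicalSpace X] {S : Set X}
    (hS : IsPreconnected S) {f : X → ℝ} (hf : ContinuousOn f S) {a ε : ℝ}
    (h : ∀ y ∈ S, |(|f y| - a)| ≤ ε) {y y' : X} (hy : y ∈ S) (hy' : y' ∈ S) :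
    |f y - f y'| ≤ 4 * ε := by
  have hy₁ := abs_le.1 (h y hy)
  have hy₂ := abs_le.1 (h y' hy')
  have hε : 0 ≤ ε := (abs_nonneg _).trans (h y hy)
  by_cases hsign : 0 ≤ f y * f y'
  · have : |f y - f y'| = |(|f y| - |f y'|)| := by
      rw [← sq_eq_sq_iff_abs_eq_abs, sub_sq, sub_sq, sq_abs, sq_abs, mul_assoc, mul_assoc,
        ← abs_mul, abs_of_nonneg hsign]
    rw [this, abs_le]
    constructor <;> linarith
  · obtain ⟨x, hx, hx0⟩ : ∃ x ∈ S, f x = 0 := by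
      rcases lt_or_gt_of_ne (fun h0 : f y = 0 => hsign (by simp [h0])) with h1 | h1
      · exact hS.intermediate_value hy hy' hf ⟨h1.le, by nlinarith⟩
      · exact hS.intermediate_value hy' hy hf ⟨by nlinarith, h1.le⟩
    have ha : |a| ≤ ε := by simpa [hx0] using h x hx
    calc |f y - f y'| ≤ |f y| + |f y'| := abs_sub _ _
      _ ≤ 4 * ε := by linarith [le_abs_self a]

theorem gradNorm_le_of_abs_abs_sub_le {ω : ℝ → ℝ} (hω : IsMajorant ω) {G : Set ℂ}
    (hG : IsOpen G) (hfr : (frontier G).Nonempty) {f : ℂ → ℝ} (hf : IsHarmonicOnR f G)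
    {K : ℝ} (hK : 0 ≤ K)
    (hbd : ∀ z ∈ G, ∀ w ∈ frontier G, |(|f z| - |f w|)| ≤ K * ω (dist z w))
    {z : ℂ} (hz : z ∈ G) :
    gradNorm f z ≤ 32 * K * ω (infDist z (frontier G)) / infDist z (frontier G) := by
  set d := infDist z (frontier G)
  have hd : 0 < d := infDist_frontier_pos hG hfr hz
  have hball : ball z d ⊆ G := ball_infDist_frontier_subset hG hz
  obtain ⟨w₀, hw₀, hzw₀⟩ := isClosed_frontier.exists_infDist_eq_dist hfr z
  have hnear : ∀ y ∈ ball z d, |(|f y| - |f w₀|)| ≤ 2 * K * ω d := by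
    intro y hy
    have hyw₀ : dist y w₀ ≤ 2 * d := by
      linarith [dist_triangle y z w₀, mem_ball.1 hy, hzw₀]
    calc |(|f y| - |f w₀|)| ≤ K * ω (dist y w₀) := hbd y (hball hy) w₀ hw₀
      _ ≤ K * ω (2 * d) := by
        gcongr
        exact hω.2.1 dist_nonneg (mem_Ici.2 (by positivity)) hyw₀
      _ ≤ 2 * K * ω d := by nlinarith [hω.map_two_mul_le hd]
  obtain ⟨F, hF, hFf⟩ :=
    ((hf.harmonicOnNhd hG).mono hball).exists_analyticOnNhd_ball_re_eq
  have hderiv : ‖deriv F z‖ ≤ 4 * (4 * (2 * K * ω d)) / d := by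
    refine norm_deriv_le_of_forall_re_sub_le hd hF.differentiableOn fun ζ hζ => ?_
    rw [sub_re, show (F ζ).re = f ζ from hFf hζ, show (F z).re = f z from hFf (mem_ball_self hd)]
    exact (le_abs_self _).trans <| abs_sub_le_of_abs_abs_sub_le (convex_ball z d).isPreconnected
      ((hf.1.continuousOn).mono hball) hnear hζ (mem_ball_self hd)
  rw [gradNorm_eq_norm_deriv (hF z (mem_ball_self hd)).differentiableAt
    (hFf.eventuallyEq_of_mem (isOpen_ball.mem_nhds (mem_ball_self hd)))]
  exact hderiv.trans_eq (by ring)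

theorem abs_sub_le_of_mem_closure {X : Type*} [PseudoMetricSpace X] {ω : ℝ → ℝ}
    (hω : ContinuousOn ω (Ici 0)) {G : Set X} {g : X → ℝ} (hg : ContinuousOn g (closure G))
    {K : ℝ} (h : ∀ z ∈ G, ∀ w ∈ G, |g z - g w| ≤ K * ω (dist z w)) {z w : X} (hz : z ∈ G)
    (hw : w ∈ closure G) : |g z - g w| ≤ K * ω (dist z w) :=
  le_on_closure (h z hz) (continuousOn_const.sub hg).abs
    (continuousOn_const.mul (hω.comp (continuous_const.dist continuous_id).continuousOn
      fun _ _ => dist_nonneg)) hw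

theorem intervalIntegral.integral_deriv_eq_integral_derivWithin {E F : Type*}
    [NormedAddCommGroup E] [NormedSpace ℝ E] [NormedAddCommGroup F] [NormedSpace ℝ F]
    (γ : ℝ → E) (Φ : ℝ → E → F) {a b : ℝ} (hab : a ≤ b) :
    ∫ t in a..b, Φ t (deriv γ t) = ∫ t in a..b, Φ t (derivWithin γ (Icc a b) t) := by
  refine intervalIntegral.integral_congr_ae ?_
  filter_upwards [Measure.ae_ne volume b] with t htb ht
  rw [uIoc_of_le hab] at ht
  rw [derivWithin_of_mem_nhds (Icc_mem_nhds ht.1 (lt_of_le_of_ne ht.2 htb))]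

theorem abs_sub_le_integral_of_gradNorm_le {G : Set ℂ} (hG : IsOpen G) {f : ℂ → ℝ}
    (hf : ContDiffOn ℝ 1 f G) {φ : ℂ → ℝ} (hφ : ContinuousOn φ G)
    (hgrad : ∀ y ∈ G, gradNorm f y ≤ φ y) {γ : ℝ → ℂ} {a b : ℝ} (hab : a ≤ b)
    (hγ : ContDiffOn ℝ 1 γ (Icc a b)) (hγG : MapsTo γ (Icc a b) G) :
    |f (γ b) - f (γ a)| ≤ ∫ t in a..b, φ (γ t) * ‖deriv γ t‖ := by
  rcases hab.eq_or_lt with rfl | hab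
  · simp
  set γ' := derivWithin γ (Icc a b)
  have hγ' : ContinuousOn γ' (Icc a b) :=
    hγ.continuousOn_derivWithin (uniqueDiffOn_Icc hab) le_rfl
  have hchain : ∀ t ∈ Ioo a b, HasDerivAt (fun t => f (γ t)) (fderiv ℝ f (γ t) (γ' t)) t := by
    intro t ht
    have hnhds : Icc a b ∈ 𝓝 t := Icc_mem_nhds ht.1 ht.2
    have hγt : γ t ∈ G := hγG (Ioo_subset_Icc_self ht)
    rw [show γ' t = deriv γ t from derivWithin_of_mem_nhds hnhds]
    have hγd := (hγ.differentiableOn one_ne_zero t (Ioo_subset_Icc_self ht)).differentiableAt hnhds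
    exact ((hf.differentiableOn one_ne_zero _ hγt).differentiableAt (hG.mem_nhds hγt)).hasFDerivAt
      |>.comp_hasDerivAt t hγd.hasDerivAt
  have hFTC : ∫ t in a..b, fderiv ℝ f (γ t) (γ' t) = f (γ b) - f (γ a) :=
    intervalIntegral.integral_eq_sub_of_hasDeriv_right_of_le hab.le
      (hf.continuousOn.comp hγ.continuousOn hγG) (fun t ht => (hchain t ht).hasDerivWithinAt)
      (((hf.continuousOn_fderiv_of_isOpen hG le_rfl).comp hγ.continuousOn hγG).clm_apply hγ'
        |>.intervalIntegrable_of_Icc hab.le)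
  rw [intervalIntegral.integral_deriv_eq_integral_derivWithin γ (fun t v => φ (γ t) * ‖v‖) hab.le,
    ← hFTC, ← Real.norm_eq_abs]
  refine intervalIntegral.norm_integral_le_of_norm_le hab.le (ae_of_all _ fun t ht => ?_)
    (((hφ.comp hγ.continuousOn hγG).mul hγ'.norm).intervalIntegrable_of_Icc hab.le)
  have hγt : γ t ∈ G := hγG (Ioc_subset_Icc_self ht)
  exact (abs_fderiv_apply_le_gradNorm_mul_norm f (γ t) (γ' t)).trans
    (mul_le_mul_of_nonneg_right (hgrad _ hγt) (norm_nonneg _))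

theorem abs_sub_le_mul_integral_of_abs_abs_sub_le {ω : ℝ → ℝ} (hω : IsMajorant ω)
    {G : Set ℂ} (hG : IsOpen G) (hfr : (frontier G).Nonempty) {f : ℂ → ℝ}
    (hf : IsHarmonicOnR f G) {K : ℝ} (hK : 0 ≤ K)
    (hbd : ∀ z ∈ G, ∀ w ∈ frontier G, |(|f z| - |f w|)| ≤ K * ω (dist z w))
    {γ : ℝ → ℂ} (hγ : ContDiffOn ℝ 1 γ (Icc 0 1)) (hγG : ∀ t ∈ Icc (0 : ℝ) 1, γ t ∈ G) :
    |f (γ 1) - f (γ 0)| ≤ 32 * K * ∫ t in (0 : ℝ)..1,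
      ω (infDist (γ t) (frontier G)) / infDist (γ t) (frontier G) * ‖deriv γ t‖ := by
  have hdist : ContinuousOn (fun y => infDist y (frontier G)) G :=
    (continuous_infDist_pt _).continuousOn
  have hφ :
      ContinuousOn (fun y => 32 * K * ω (infDist y (frontier G)) / infDist y (frontier G)) G :=
    (continuousOn_const.mul (hω.1.comp hdist fun _ _ => infDist_nonneg)).div hdist
      fun y hy => (infDist_frontier_pos hG hfr hy).ne'
  rw [← intervalIntegral.integral_const_mul]
  refine (abs_sub_le_integral_of_gradNorm_le hG (hf.1.of_le one_le_two) hφ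
    (fun y hy => gradNorm_le_of_abs_abs_sub_le hω hG hfr hf hK hbd hy) zero_le_one hγ hγG
    ).trans_eq ?_
  congr 1 with t
  ring

theorem stmt4_general (ω : ℝ → ℝ) (hω : IsMajorant ω)
    (G : Set ℂ) (hGopen : IsOpen G) (hGconn : IsConnected G) (hGproper : G ≠ univ)
    (C : ℝ) (hC : 0 < C)
    (hcurve : ∀ z ∈ G, ∀ w ∈ G, ∃ γ : ℝ → ℂ,
      γ 0 = z ∧ γ 1 = w ∧ (∀ t ∈ Icc (0:ℝ) 1, γ t ∈ G) ∧
      ContDiffOn ℝ 1 γ (Icc (0:ℝ) 1) ∧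
      (∫ t in (0:ℝ)..1,
          ω (infDist (γ t) (frontier G)) / infDist (γ t) (frontier G) * ‖deriv γ t‖)
        ≤ C * ω (dist z w))
    (f : ℂ → ℝ) (hf : IsHarmonicOnR f G) (hfc : ContinuousOn f (closure G)) :
    ((∃ K > (0 : ℝ), ∀ z ∈ G, ∀ w ∈ G, |f z - f w| ≤ K * ω (dist z w)) ↔
      (∃ K > (0 : ℝ), ∀ z ∈ G, ∀ w ∈ G, abs (|f z| - |f w|) ≤ K * ω (dist z w))) ∧
    ((∃ K > (0 : ℝ), ∀ z ∈ G, ∀ w ∈ G, abs (|f z| - |f w|) ≤ K * ω (dist z w)) ↔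
      (∃ K > (0 : ℝ), ∀ z ∈ G, ∀ w ∈ frontier G, abs (|f z| - |f w|) ≤ K * ω (dist z w))) := by
  have i_ii : (∃ K > (0 : ℝ), ∀ z ∈ G, ∀ w ∈ G, |f z - f w| ≤ K * ω (dist z w)) →
      ∃ K > (0 : ℝ), ∀ z ∈ G, ∀ w ∈ G, |(|f z| - |f w|)| ≤ K * ω (dist z w) :=
    fun ⟨K, hK, h⟩ => ⟨K, hK, fun z hz w hw => (abs_abs_sub_abs_le_abs_sub _ _).trans (h z hz w hw)⟩
  have ii_iii : (∃ K > (0 : ℝ), ∀ z ∈ G, ∀ w ∈ G, |(|f z| - |f w|)| ≤ K * ω (dist z w)) →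
      ∃ K > (0 : ℝ), ∀ z ∈ G, ∀ w ∈ frontier G, |(|f z| - |f w|)| ≤ K * ω (dist z w) :=
    fun ⟨K, hK, h⟩ => ⟨K, hK, fun z hz w hw => abs_sub_le_of_mem_closure hω.1 hfc.abs h hz
      (frontier_subset_closure hw)⟩
  have iii_i : (∃ K > (0 : ℝ), ∀ z ∈ G, ∀ w ∈ frontier G, |(|f z| - |f w|)| ≤ K * ω (dist z w)) →
      ∃ K > (0 : ℝ), ∀ z ∈ G, ∀ w ∈ G, |f z - f w| ≤ K * ω (dist z w) := by
    rintro ⟨K, hK, hbd⟩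
    have hfr : (frontier G).Nonempty := nonempty_frontier_iff.2 ⟨hGconn.nonempty, hGproper⟩
    refine ⟨32 * K * C, by positivity, fun z hz w hw => ?_⟩
    obtain ⟨γ, rfl, rfl, hγG, hγ, hγC⟩ := hcurve z hz w hw
    calc |f (γ 0) - f (γ 1)| = |f (γ 1) - f (γ 0)| := abs_sub_comm _ _
      _ ≤ 32 * K * (C * ω (dist (γ 0) (γ 1))) :=
        (abs_sub_le_mul_integral_of_abs_abs_sub_le hω hGopen hfr hf hK.le hbd hγ hγG).trans
          (by gcongr)
      _ = 32 * K * C * ω (dist (γ 0) (γ 1)) := by ring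
  exact ⟨⟨i_ii, iii_i ∘ ii_iii⟩, ⟨ii_iii, i_ii ∘ iii_i⟩⟩

/-- Theorem 2: let `ω` be a majorant satisfying
`∫₀^δ ω(t)/t dt ≤ M ω(δ)` for all small `δ > 0`, and let `G` be a proper subdomain of
the plane such that any two points `z, w ∈ G` are joined by a rectifiable curve
`γ ⊆ G` with `∫_γ ω(d_G(ζ))/d_G(ζ) ds(ζ) ≤ C ω(|z-w|)`. If `f` is real harmonic in
`G` and continuous up to `∂G`, then `f ∈ L_ω(G) ↔ |f| ∈ L_ω(G) ↔ |f| ∈ L_ω(G, ∂G)`. -/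
theorem stmt4 (ω : ℝ → ℝ) (hω : IsMajorant ω)
    (M : ℝ) (hM : 0 < M) (δ₀ : ℝ) (hδ₀ : 0 < δ₀)
    (hωint : ∀ δ : ℝ, 0 < δ → δ < δ₀ → (∫ t in (0:ℝ)..δ, ω t / t) ≤ M * ω δ)
    (G : Set ℂ) (hGopen : IsOpen G) (hGconn : IsConnected G) (hGproper : G ≠ univ)
    (C : ℝ) (hC : 0 < C)
    (hcurve : ∀ z ∈ G, ∀ w ∈ G, ∃ γ : ℝ → ℂ,
      γ 0 = z ∧ γ 1 = w ∧ (∀ t ∈ Icc (0:ℝ) 1, γ t ∈ G) ∧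
      ContDiffOn ℝ 1 γ (Icc (0:ℝ) 1) ∧
      (∫ t in (0:ℝ)..1,
          ω (infDist (γ t) (frontier G)) / infDist (γ t) (frontier G) * ‖deriv γ t‖)
        ≤ C * ω (dist z w))
    (f : ℂ → ℝ) (hf : IsHarmonicOnR f G) (hfc : ContinuousOn f (closure G)) :
    ((∃ K > (0 : ℝ), ∀ z ∈ G, ∀ w ∈ G, |f z - f w| ≤ K * ω (dist z w)) ↔
      (∃ K > (0 : ℝ), ∀ z ∈ G, ∀ w ∈ G, abs (|f z| - |f w|) ≤ K * ω (dist z w))) ∧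
    ((∃ K > (0 : ℝ), ∀ z ∈ G, ∀ w ∈ G, abs (|f z| - |f w|) ≤ K * ω (dist z w)) ↔
      (∃ K > (0 : ℝ), ∀ z ∈ G, ∀ w ∈ frontier G, abs (|f z| - |f w|) ≤ K * ω (dist z w))) :=
  stmt4_general ω hω G hGopen hGconn hGproper C hC hcurve f hf hfc
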